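/- For every k ∈ ℕ, every depth-k local policy π, and every local state x ∈ X: ν^D_k(π)(x) ≤ ν^IO_k(π)(x). Consequently, for any nonnegative b0 : X → ℝ summing to 1 and any horizon h, the influence-optimistic Q-Dec-POMDP bound is at most the influence-optimistic Q-MPOMDP bound: sup_π Σ_x b0(x)·ν^D_h(π)(x) ≤ sup_π Σ_x b0(x)·ν^IO_h(π)(x). -/

import Mathlib

/-! Since the maximum of a sum is at most the sum of the maxima, pulling `max_u` inside
`∑_o` can only increase a Bellman backup whose weights `Ω · Pl · Pn` are nonnegative;
induction on the horizon gives `ν^D ≤ ν^IO` pointwise. Comparing the suprema over policies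
then only needs `ν^IO_h` to be bounded above uniformly in `π`, which holds because all the
data live on finite types. -/

open Finset

section LocalModel

variable {Xl Xn A O U : Type*}
  [Fintype Xl] [Nonempty Xl] [Fintype Xn] [Nonempty Xn]
  [Fintype A] [Nonempty A] [Fintype O] [Nonempty O] [Fintype U] [Nonempty U]

/-- Influence-optimistic (IO, Q-MPOMDP style) value vectors `ν^IO_k(π)(x)`. A depth-`k`
local policy is a function `List O → A`; `π []` is its action at the empty history and
`fun h => π (o :: h)` is the subtree policy `π↓o`. -/
noncomputable def nuIO (Pl : Xl → (Xl × Xn) → A → ℝ) (Pn : Xn → (Xl × Xn) → A → U → ℝ)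
    (Ω : O → A → (Xl × Xn) → ℝ) (r : A → (Xl × Xn) → ℝ) :
    ℕ → (List O → A) → (Xl × Xn) → ℝ
  | 0 => fun _ _ => 0
  | k + 1 => fun π x =>
      r (π []) x + ∑ o : O,
        Finset.univ.sup' Finset.univ_nonempty (fun u : U =>
          ∑ x' : Xl × Xn,
            Ω o (π []) x' * Pl x'.1 x (π []) * Pn x'.2 x (π []) u *
              nuIO Pl Pn Ω r k (fun h => π (o :: h)) x')

/-- Influence-optimistic plan-time (Dec-POMDP) value vectors `ν^D_k(π)(x)`. -/
noncomputable def nuD (Pl : Xl → (Xl × Xn) → A → ℝ) (Pn : Xn → (Xl × Xn) → A → U → ℝ)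
    (Ω : O → A → (Xl × Xn) → ℝ) (r : A → (Xl × Xn) → ℝ) :
    ℕ → (List O → A) → (Xl × Xn) → ℝ
  | 0 => fun _ _ => 0
  | k + 1 => fun π x =>
      r (π []) x +
        Finset.univ.sup' Finset.univ_nonempty (fun u : U =>
          ∑ o : O, ∑ x' : Xl × Xn,
            Ω o (π []) x' * Pl x'.1 x (π []) * Pn x'.2 x (π []) u *
              nuD Pl Pn Ω r k (fun h => π (o :: h)) x')

theorem Finset.sup'_sum_le_sum_sup' {ι κ M : Type*} [AddCommMonoid M] [SemilatticeSup M]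
    [IsOrderedAddMonoid M] (s : Finset ι) {t : Finset κ} (ht : t.Nonempty) (f : ι → κ → M) :
    t.sup' ht (fun u => ∑ i ∈ s, f i u) ≤ ∑ i ∈ s, t.sup' ht (f i) :=
  sup'_le _ _ fun _ hu => sum_le_sum fun i _ => le_sup' (f i) hu

omit [Nonempty Xl] [Nonempty Xn] [Fintype A] [Nonempty A] [Nonempty O] in
theorem nuD_apply_le_nuIO_apply (Pl : Xl → (Xl × Xn) → A → ℝ) (Pn : Xn → (Xl × Xn) → A → U → ℝ)
    (Ω : O → A → (Xl × Xn) → ℝ) (r : A → (Xl × Xn) → ℝ)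
    (hPl0 : ∀ x'l x a, 0 ≤ Pl x'l x a) (hPn0 : ∀ x'n x a u, 0 ≤ Pn x'n x a u)
    (hΩ0 : ∀ o a x', 0 ≤ Ω o a x') :
    ∀ (k : ℕ) (π : List O → A) (x : Xl × Xn), nuD Pl Pn Ω r k π x ≤ nuIO Pl Pn Ω r k π x
  | 0, _, _ => le_rfl
  | k + 1, π, x => by
    have ih := nuD_apply_le_nuIO_apply Pl Pn Ω r hPl0 hPn0 hΩ0 k
    dsimp only [nuD, nuIO]
    gcongr r (π []) x + ?_
    refine le_trans (sup'_le _ _ fun u hu => ?_) (sup'_sum_le_sum_sup' _ _ _)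
    refine le_trans ?_ (le_sup' _ hu)
    gcongr with o _ x' _
    · exact mul_nonneg (mul_nonneg (hΩ0 _ _ _) (hPl0 _ _ _)) (hPn0 _ _ _ _)
    · exact ih _ _

omit [Nonempty Xl] [Nonempty Xn] [Nonempty A] [Nonempty O] in
theorem exists_nuIO_le (Pl : Xl → (Xl × Xn) → A → ℝ) (Pn : Xn → (Xl × Xn) → A → U → ℝ)
    (Ω : O → A → (Xl × Xn) → ℝ) (r : A → (Xl × Xn) → ℝ)
    (hPl0 : ∀ x'l x a, 0 ≤ Pl x'l x a) (hPn0 : ∀ x'n x a u, 0 ≤ Pn x'n x a u)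
    (hΩ0 : ∀ o a x', 0 ≤ Ω o a x') :
    ∀ k : ℕ, ∃ C, 0 ≤ C ∧ ∀ (π : List O → A) (x : Xl × Xn), nuIO Pl Pn Ω r k π x ≤ C
  | 0 => ⟨0, le_rfl, fun _ _ => le_rfl⟩
  | k + 1 => by
    obtain ⟨C, hC0, hC⟩ := exists_nuIO_le Pl Pn Ω r hPl0 hPn0 hΩ0 k
    obtain ⟨R, hR⟩ := Finite.bddAbove_range fun p : A × (Xl × Xn) => r p.1 p.2
    obtain ⟨W, hW⟩ := Finite.bddAbove_range fun p : O × A × (Xl × Xn) × U =>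
      ∑ x' : Xl × Xn, Ω p.1 p.2.1 x' * Pl x'.1 p.2.2.1 p.2.1 * Pn x'.2 p.2.2.1 p.2.1 p.2.2.2
    refine ⟨max R 0 + Fintype.card O * (max W 0 * C), by positivity, fun π x => ?_⟩
    dsimp only [nuIO]
    gcongr
    · exact (hR (Set.mem_range_self (π [], x))).trans (le_max_left _ _)
    · calc _ ≤ ∑ _o : O, max W 0 * C := sum_le_sum fun o _ => sup'_le _ _ fun u _ => ?_
        _ = Fintype.card O * (max W 0 * C) := by simp
      calc _ ≤ ∑ x' : Xl × Xn, Ω o (π []) x' * Pl x'.1 x (π []) * Pn x'.2 x (π []) u * C := by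
            gcongr with x' _
            · exact mul_nonneg (mul_nonneg (hΩ0 _ _ _) (hPl0 _ _ _)) (hPn0 _ _ _ _)
            · exact hC _ _
        _ = (∑ x' : Xl × Xn, Ω o (π []) x' * Pl x'.1 x (π []) * Pn x'.2 x (π []) u) * C :=
            (sum_mul ..).symm
        _ ≤ max W 0 * C := by
            gcongr
            exact (hW (Set.mem_range_self (o, π [], x, u))).trans (le_max_left _ _)

theorem nuD_le_nuIO_general
    (Pl : Xl → (Xl × Xn) → A → ℝ) (Pn : Xn → (Xl × Xn) → A → U → ℝ)
    (Ω : O → A → (Xl × Xn) → ℝ) (r : A → (Xl × Xn) → ℝ)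
    (hPl0 : ∀ x'l x a, 0 ≤ Pl x'l x a)
    (hPn0 : ∀ x'n x a u, 0 ≤ Pn x'n x a u)
    (hΩ0 : ∀ o a x', 0 ≤ Ω o a x') :
    (∀ (k : ℕ) (π : List O → A) (x : Xl × Xn),
        nuD Pl Pn Ω r k π x ≤ nuIO Pl Pn Ω r k π x) ∧
      ∀ (b0 : Xl × Xn → ℝ), (∀ x, 0 ≤ b0 x) → (∑ x : Xl × Xn, b0 x = 1) → ∀ h : ℕ,
        (⨆ π : List O → A, ∑ x : Xl × Xn, b0 x * nuD Pl Pn Ω r h π x) ≤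
          ⨆ π : List O → A, ∑ x : Xl × Xn, b0 x * nuIO Pl Pn Ω r h π x := by
  have hD := nuD_apply_le_nuIO_apply Pl Pn Ω r hPl0 hPn0 hΩ0
  refine ⟨hD, fun b0 hb0 _ h => ?_⟩
  -- `⨆` over ℝ is junk on unbounded ranges, so the right-hand side must be bounded above.
  obtain ⟨C, -, hC⟩ := exists_nuIO_le Pl Pn Ω r hPl0 hPn0 hΩ0 h
  refine ciSup_mono ⟨∑ x, b0 x * C, ?_⟩ fun π => ?_
  · rintro _ ⟨π, rfl⟩
    exact sum_le_sum fun x _ => mul_le_mul_of_nonneg_left (hC π x) (hb0 x)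
  · exact sum_le_sum fun x _ => mul_le_mul_of_nonneg_left (hD h π x) (hb0 x)

/-- the influence-optimistic plan-time (Dec-POMDP) vectors are pointwise
at most the influence-optimistic MPOMDP vectors; consequently the IO-Q-Dec-POMDP bound
is at most the IO-Q-MPOMDP bound for any initial belief and horizon. -/
theorem nuD_le_nuIO
    (Pl : Xl → (Xl × Xn) → A → ℝ) (Pn : Xn → (Xl × Xn) → A → U → ℝ)
    (Ω : O → A → (Xl × Xn) → ℝ) (r : A → (Xl × Xn) → ℝ)
    (hPl0 : ∀ x'l x a, 0 ≤ Pl x'l x a) (hPl1 : ∀ x a, ∑ x'l : Xl, Pl x'l x a = 1)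
    (hPn0 : ∀ x'n x a u, 0 ≤ Pn x'n x a u) (hPn1 : ∀ x a u, ∑ x'n : Xn, Pn x'n x a u = 1)
    (hΩ0 : ∀ o a x', 0 ≤ Ω o a x') (hΩ1 : ∀ a x', ∑ o : O, Ω o a x' = 1) :
    (∀ (k : ℕ) (π : List O → A) (x : Xl × Xn),
        nuD Pl Pn Ω r k π x ≤ nuIO Pl Pn Ω r k π x) ∧
      ∀ (b0 : Xl × Xn → ℝ), (∀ x, 0 ≤ b0 x) → (∑ x : Xl × Xn, b0 x = 1) → ∀ h : ℕ,
        (⨆ π : List O → A, ∑ x : Xl × Xn, b0 x * nuD Pl Pn Ω r h π x) ≤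
          ⨆ π : List O → A, ∑ x : Xl × Xn, b0 x * nuIO Pl Pn Ω r h π x :=
  nuD_le_nuIO_general Pl Pn Ω r hPl0 hPn0 hΩ0

end LocalModel
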